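/- Let F be a field containing 𝔽q, equipped with a discrete non-archimedean additive valuation ν : F → ℤ ∪ {∞} with ν(F^*) = ℤ. Let φ, ψ ∈ F[X] be q-linearized polynomials of degree > 1 whose coefficients φ₀, ψ₀ of X satisfy ν(φ₀) = ν(ψ₀) = 0, and let f ∈ F[X] be a nonzero q-linearized polynomial with f ∘ φ = ψ ∘ f. Set λ_ν(h) = −min{(ν(h_i) − ν(h₀))/(q^i − 1) : i ≥ 1, h_i ≠ 0} for q-linearized h = Σ h_i X^{q^i} of degree > 1. If λ_ν(φ) ∈ ℤ, then λ_ν(ψ) ∈ ℤ. (This expresses that isogenies of Drinfeld modules preserve stable reduction at a place.) -/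

import Mathlib

/-!
View a `q`-linearized `h = Σ hᵢ X^(qⁱ)` through its Newton polygon, the points `(qⁱ, ν hᵢ)`.
With `ν φ₀ = 0`, `λ_ν(φ) = n` says that the line `y + n x = n` (through `(1, 0)`) supports the
polygon of `φ` and touches it at some `qʳ` with `r ≥ 1`. Supporting lines compose: if
`y + a x = A` supports `g` with rightmost contact `i₀` and `y + b x = a` supports `h` with
rightmost contact `j₀`, then `y + b x = A` supports `g ∘ h` with rightmost contact `i₀ + j₀`,
because the coefficient of `X^(q^(i₀+j₀))` in `g ∘ h` has a unique term of minimal valuation.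
Let `y + n x = M` support `f` at `j` and `y + M x = B` support `ψ` at `i`. Then `f ∘ φ` is
supported by `y + n x = M` at `j + r`, and `ψ ∘ f` by `y + n x = B` at `i + j`; as these are
the same polynomial, `B = M` and `i = r`, which says `λ_ν(ψ) = M`.
-/
open Polynomial

/-- A polynomial is `q`-linearized if it is of the form `Σ fᵢ X^(qⁱ)`. -/
def IsqLin {F : Type*} [Field F] (q : ℕ) (f : Polynomial F) : Prop :=
  ∀ n, f.coeff n ≠ 0 → ∃ i : ℕ, n = q ^ i

/-- `λ_ν(h) = − min { (ν(hᵢ) − ν(h₀))/(qⁱ − 1) : i ≥ 1, hᵢ ≠ 0 }`. -/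
noncomputable def lamNu {F : Type*} [Field F] (q : ℕ) (ν : F → ℤ) (h : Polynomial F) : ℝ :=
  - sInf {y : ℝ | ∃ i : ℕ, 1 ≤ i ∧ h.coeff (q ^ i) ≠ 0 ∧
      y = ((ν (h.coeff (q ^ i)) : ℝ) - (ν (h.coeff 1) : ℝ)) / ((q : ℝ) ^ i - 1)}

structure IsIntValuation {F : Type*} [Field F] (ν : F → ℤ) : Prop where
  map_mul : ∀ x y : F, x ≠ 0 → y ≠ 0 → ν (x * y) = ν x + ν y
  min_le_map_add : ∀ x y : F, x ≠ 0 → y ≠ 0 → x + y ≠ 0 → min (ν x) (ν y) ≤ ν (x + y)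

namespace IsIntValuation

variable {F : Type*} [Field F] {ν : F → ℤ} (hν : IsIntValuation ν)
include hν

theorem map_one : ν 1 = 0 := by
  simpa using hν.map_mul 1 1 one_ne_zero one_ne_zero

theorem map_pow {x : F} (hx : x ≠ 0) (n : ℕ) : ν (x ^ n) = n * ν x := by
  induction n with
  | zero => simpa using hν.map_one
  | succ n ih => rw [pow_succ, hν.map_mul _ _ (pow_ne_zero _ hx) hx, ih]; push_cast; ring

open Classical in
noncomputable def toAddValuation : AddValuation F (WithTop ℤ) :=
  AddValuation.of (fun x => if x = 0 then ⊤ else (ν x : WithTop ℤ)) (by simp)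
    (by simp [hν.map_one])
    (fun x y => by
      by_cases hx : x = 0
      · simp [hx]
      by_cases hy : y = 0
      · simp [hy]
      by_cases hxy : x + y = 0
      · simp [hxy]
      simp only [hx, hy, hxy, if_false]
      exact_mod_cast hν.min_le_map_add x y hx hy hxy)
    (fun x y => by
      by_cases hx : x = 0
      · simp only [hx, zero_mul, if_true, WithTop.top_add]
      by_cases hy : y = 0
      · simp only [hy, mul_zero, if_true, WithTop.add_top]
      simp [hx, hy, hν.map_mul x y hx hy])

theorem toAddValuation_apply {x : F} (hx : x ≠ 0) : hν.toAddValuation x = ν x := by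
  simp [toAddValuation, hx]

theorem le_map_sum {ι : Type*} {s : Finset ι} {g : ι → F} {A : ℤ}
    (hg : ∀ i ∈ s, g i ≠ 0 → A ≤ ν (g i)) (hs : ∑ i ∈ s, g i ≠ 0) :
    A ≤ ν (∑ i ∈ s, g i) := by
  have := AddValuation.map_le_sum hν.toAddValuation (f := g) (g := (A : WithTop ℤ)) fun i hi => by
    by_cases h : g i = 0
    · simp [h]
    · simpa [hν.toAddValuation_apply h] using hg i hi h
  simpa [hν.toAddValuation_apply hs] using this

theorem map_sum_eq {ι : Type*} [DecidableEq ι] {s : Finset ι} {g : ι → F} {i₀ : ι}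
    (hi₀ : i₀ ∈ s) (hg₀ : g i₀ ≠ 0) (hg : ∀ i ∈ s, i ≠ i₀ → g i ≠ 0 → ν (g i₀) < ν (g i)) :
    ∑ i ∈ s, g i ≠ 0 ∧ ν (∑ i ∈ s, g i) = ν (g i₀) := by
  have hrest : hν.toAddValuation (g i₀) < hν.toAddValuation (∑ i ∈ s.erase i₀, g i) := by
    rw [hν.toAddValuation_apply hg₀]
    refine AddValuation.map_lt_sum _ WithTop.coe_ne_top fun i hi => ?_
    by_cases h : g i = 0
    · simp [h]
    · simpa [hν.toAddValuation_apply h] using hg i (Finset.mem_of_mem_erase hi)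
        (Finset.ne_of_mem_erase hi) h
  have hsum := AddValuation.map_add_eq_of_lt_left _ hrest
  rw [Finset.add_sum_erase _ _ hi₀, hν.toAddValuation_apply hg₀] at hsum
  have hne : ∑ i ∈ s, g i ≠ 0 := fun h => by simp [h] at hsum
  exact ⟨hne, by simpa [hν.toAddValuation_apply hne] using hsum⟩

end IsIntValuation

theorem Polynomial.coeff_pow_expChar_pow {R : Type*} [CommSemiring R] (p : ℕ) [ExpChar R p]
    (f : R[X]) (n m : ℕ) :
    (f ^ p ^ n).coeff m = if p ^ n ∣ m then f.coeff (m / p ^ n) ^ p ^ n else 0 := by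
  rw [← map_iterateFrobenius_expand, coeff_map,
    coeff_expand (pow_pos (expChar_pos R p) n)]
  split_ifs <;> simp [iterateFrobenius_def, (expChar_pos R p).ne']

section QLinear

variable {F : Type*} [Field F] {p e q : ℕ} [ExpChar F p]

theorem coeff_pow_qpow_qpow (hq : q = p ^ e) (hq1 : 1 < q) (h : F[X]) (i k : ℕ) :
    (h ^ q ^ i).coeff (q ^ k) = if i ≤ k then h.coeff (q ^ (k - i)) ^ q ^ i else 0 := by
  have hqi : q ^ i = p ^ (e * i) := by rw [hq, pow_mul]
  rw [hqi, coeff_pow_expChar_pow, ← hqi]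
  simp only [Nat.pow_dvd_pow_iff_le_right hq1]
  split_ifs with hik
  · rw [Nat.pow_div hik (by omega)]
  · rfl

theorem coeff_comp_qpow (hq : q = p ^ e) (hq1 : 1 < q) {g : F[X]} (hg : IsqLin q g) (h : F[X])
    (k : ℕ) : (g.comp h).coeff (q ^ k) =
      ∑ i ∈ Finset.range (k + 1), g.coeff (q ^ i) * h.coeff (q ^ (k - i)) ^ q ^ i := by
  have hterm : ∀ i, g.coeff (q ^ i) * (h ^ q ^ i).coeff (q ^ k) =
      if i ≤ k then g.coeff (q ^ i) * h.coeff (q ^ (k - i)) ^ q ^ i else 0 := fun i => by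
    rw [coeff_pow_qpow_qpow hq hq1]; split_ifs <;> simp
  rw [comp_eq_sum_left, Polynomial.sum_def, finsetSum_coeff]
  simp only [coeff_C_mul]
  symm
  refine Finset.sum_bij_ne_zero (fun i _ _ => q ^ i) (fun i _ hi => ?_)
    (fun i _ _ j _ _ hij => Nat.pow_right_injective hq1 hij) (fun n hn hn0 => ?_)
    (fun i hi _ => ?_)
  · exact mem_support_iff.mpr (left_ne_zero_of_mul hi)
  · obtain ⟨j, rfl⟩ := hg n (mem_support_iff.mp hn)
    rw [hterm] at hn0
    split_ifs at hn0 with hjk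
    · exact ⟨j, Finset.mem_range.mpr (Nat.lt_succ_of_le hjk), hn0, rfl⟩
    · exact absurd rfl hn0
  · rw [hterm, if_pos (Nat.lt_succ_iff.mp (Finset.mem_range.mp hi))]

end QLinear

section SupportLine

variable {F : Type*} [Field F] {q : ℕ} {ν : F → ℤ} {h : F[X]}

theorem IsqLin.exists_coeff_qpow_ne_zero (hh : IsqLin q h) (h0 : h ≠ 0) :
    ∃ i, h.coeff (q ^ i) ≠ 0 := by
  obtain ⟨i, hi⟩ := hh _ (leadingCoeff_ne_zero.2 h0)
  exact ⟨i, hi ▸ leadingCoeff_ne_zero.2 h0⟩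

theorem IsqLin.exists_one_le_coeff_qpow_ne_zero (hh : IsqLin q h) (hd : 1 < h.natDegree) :
    ∃ i, 1 ≤ i ∧ h.coeff (q ^ i) ≠ 0 := by
  have h0 : h ≠ 0 := by rintro rfl; simp at hd
  obtain ⟨i, hi⟩ := hh _ (leadingCoeff_ne_zero.2 h0)
  refine ⟨i, Nat.one_le_iff_ne_zero.2 ?_, hi ▸ leadingCoeff_ne_zero.2 h0⟩
  rintro rfl
  simp [hi] at hd

theorem finite_setOf_coeff_qpow_ne_zero (hq1 : 1 < q) (h : F[X]) :
    {i | h.coeff (q ^ i) ≠ 0}.Finite :=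
  (Set.finite_Iic h.natDegree).subset fun i hi =>
    ((Nat.lt_pow_self hq1).le.trans (le_natDegree_of_ne_zero hi) : i ≤ h.natDegree)

/-- The points `(qⁱ, ν hᵢ)` of the Newton polygon of `h` all lie on or above the line
`y + b x = a`, and `(q^i₀, ν h_i₀)` is the rightmost one on it. -/
structure IsSupportLine (q : ℕ) (ν : F → ℤ) (h : F[X]) (b a : ℤ) (i₀ : ℕ) : Prop where
  coeff_ne_zero : h.coeff (q ^ i₀) ≠ 0
  eq : ν (h.coeff (q ^ i₀)) + b * q ^ i₀ = a
  le : ∀ i, h.coeff (q ^ i) ≠ 0 → a ≤ ν (h.coeff (q ^ i)) + b * q ^ i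
  lt : ∀ i, i₀ < i → h.coeff (q ^ i) ≠ 0 → a < ν (h.coeff (q ^ i)) + b * q ^ i

theorem IsSupportLine.unique {b a a' : ℤ} {i₀ i₀' : ℕ} (hl : IsSupportLine q ν h b a i₀)
    (hl' : IsSupportLine q ν h b a' i₀') : a = a' ∧ i₀ = i₀' := by
  have ha : a = a' := le_antisymm (hl'.eq ▸ hl.le i₀' hl'.coeff_ne_zero)
    (hl.eq ▸ hl'.le i₀ hl.coeff_ne_zero)
  refine ⟨ha, le_antisymm (not_lt.1 fun hlt => ?_) (not_lt.1 fun hlt => ?_)⟩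
  · exact (hl'.lt i₀ hlt hl.coeff_ne_zero).ne (hl.eq.trans ha).symm
  · exact (hl.lt i₀' hlt hl'.coeff_ne_zero).ne (hl'.eq.trans ha.symm).symm

theorem exists_isSupportLine (hq1 : 1 < q) (b : ℤ) (hh : ∃ i, h.coeff (q ^ i) ≠ 0) :
    ∃ a i₀, IsSupportLine q ν h b a i₀ := by
  set w : ℕ → ℤ := fun i => ν (h.coeff (q ^ i)) + b * q ^ i
  have hfin := finite_setOf_coeff_qpow_ne_zero hq1 h
  obtain ⟨i₁, hi₁, hmin⟩ := Set.exists_min_image _ w hfin hh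
  obtain ⟨i₀, ⟨hi₀, hw₀⟩, hmax⟩ := Set.exists_max_image {i | h.coeff (q ^ i) ≠ 0 ∧ w i = w i₁}
    id (hfin.subset fun i hi => hi.1) ⟨i₁, hi₁, rfl⟩
  refine ⟨w i₁, i₀, hi₀, hw₀, hmin, fun i hlt hi => (hmin i hi).lt_of_ne fun heq => ?_⟩
  exact hlt.not_ge (hmax i ⟨hi, heq.symm⟩)

theorem exists_isSupportLine_of_le (hq1 : 1 < q) {b a : ℤ} {i₁ : ℕ}
    (hle : ∀ i, h.coeff (q ^ i) ≠ 0 → a ≤ ν (h.coeff (q ^ i)) + b * q ^ i)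
    (hi₁ : h.coeff (q ^ i₁) ≠ 0) (heq : ν (h.coeff (q ^ i₁)) + b * q ^ i₁ = a) :
    ∃ i₀, i₁ ≤ i₀ ∧ IsSupportLine q ν h b a i₀ := by
  obtain ⟨a', i₀, hl⟩ := exists_isSupportLine (ν := ν) hq1 b ⟨i₁, hi₁⟩
  have ha : a' = a := le_antisymm (heq ▸ hl.le i₁ hi₁) (hl.eq ▸ hle i₀ hl.coeff_ne_zero)
  subst ha
  exact ⟨i₀, not_lt.1 fun hlt => (hl.lt i₁ hlt hi₁).ne heq.symm, hl⟩

end SupportLine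

theorem IsSupportLine.comp {F : Type*} [Field F] {p e q : ℕ} [ExpChar F p] {ν : F → ℤ}
    (hν : IsIntValuation ν) (hq : q = p ^ e) (hq1 : 1 < q) {g h : F[X]} (hg : IsqLin q g)
    {a b A : ℤ} {i₀ j₀ : ℕ} (hgl : IsSupportLine q ν g a A i₀)
    (hhl : IsSupportLine q ν h b a j₀) : IsSupportLine q ν (g.comp h) b A (i₀ + j₀) := by
  set t : ℕ → ℕ → F := fun k i => g.coeff (q ^ i) * h.coeff (q ^ (k - i)) ^ q ^ i with ht
  have hcoeff : ∀ k, (g.comp h).coeff (q ^ k) = ∑ i ∈ Finset.range (k + 1), t k i :=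
    coeff_comp_qpow hq hq1 hg h
  have hsplit : ∀ k i, i ≤ k → g.coeff (q ^ i) ≠ 0 → h.coeff (q ^ (k - i)) ≠ 0 →
      ν (t k i) + b * q ^ k = (ν (g.coeff (q ^ i)) + a * q ^ i) +
        q ^ i * (ν (h.coeff (q ^ (k - i))) + b * q ^ (k - i) - a) := by
    intro k i hik hgi hhi
    have hk : (q : ℤ) ^ k = q ^ i * q ^ (k - i) := by rw [← pow_add, Nat.add_sub_cancel' hik]
    rw [ht, hν.map_mul _ _ hgi (pow_ne_zero _ hhi), hν.map_pow hhi, hk]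
    push_cast
    ring
  have hbound : ∀ k, ∀ i ∈ Finset.range (k + 1), t k i ≠ 0 →
      A ≤ ν (t k i) + b * q ^ k ∧ (i₀ < i ∨ j₀ < k - i → A < ν (t k i) + b * q ^ k) := by
    intro k i hi hti
    obtain ⟨hgi, hhi⟩ := mul_ne_zero_iff.1 hti
    replace hhi := (pow_ne_zero_iff (pow_ne_zero _ (by omega))).1 hhi
    rw [hsplit k i (Nat.lt_succ_iff.1 (Finset.mem_range.1 hi)) hgi hhi]
    have hqi : (0 : ℤ) < q ^ i := pow_pos (by omega) i
    have hG := hgl.le i hgi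
    have hH := hhl.le (k - i) hhi
    refine ⟨by nlinarith, fun hstrict => hstrict.elim (fun hlt => ?_) fun hlt => ?_⟩
    · nlinarith [hgl.lt i hlt hgi]
    · nlinarith [hhl.lt (k - i) hlt hhi]
  have hhj : h.coeff (q ^ (i₀ + j₀ - i₀)) ≠ 0 := by
    rw [Nat.add_sub_cancel_left]; exact hhl.coeff_ne_zero
  have ht₀ : ν (t (i₀ + j₀) i₀) + b * q ^ (i₀ + j₀) = A := by
    rw [hsplit _ _ (by omega) hgl.coeff_ne_zero hhj, Nat.add_sub_cancel_left, hgl.eq, hhl.eq]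
    ring
  obtain ⟨hne, hval⟩ : (g.comp h).coeff (q ^ (i₀ + j₀)) ≠ 0 ∧
      ν ((g.comp h).coeff (q ^ (i₀ + j₀))) = ν (t (i₀ + j₀) i₀) := by
    rw [hcoeff]
    refine hν.map_sum_eq (Finset.mem_range.2 (by omega))
      (mul_ne_zero hgl.coeff_ne_zero (pow_ne_zero _ hhj)) fun i hi hi₀ hti => ?_
    have hik := Nat.lt_succ_iff.1 (Finset.mem_range.1 hi)
    linarith [(hbound _ i hi hti).2 (by omega)]
  refine ⟨hne, hval ▸ ht₀, fun k hk => ?_, fun k hlt hk => ?_⟩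
  · rw [hcoeff] at hk ⊢
    have := hν.le_map_sum (A := A - b * q ^ k) (fun i hi hti => by
      linarith [(hbound k i hi hti).1]) hk
    linarith
  · rw [hcoeff] at hk ⊢
    have := hν.le_map_sum (A := A + 1 - b * q ^ k) (fun i hi hti => by
      have hik := Nat.lt_succ_iff.1 (Finset.mem_range.1 hi)
      linarith [(hbound k i hi hti).2 (by omega)]) hk
    linarith

section LamNu

variable {F : Type*} [Field F] {q : ℕ} {ν : F → ℤ} {h : F[X]}

theorem Nat.cast_pow_sub_one_pos {q i : ℕ} (hq1 : 1 < q) (hi : 1 ≤ i) :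
    (0 : ℝ) < (q : ℝ) ^ i - 1 :=
  sub_pos.2 (one_lt_pow₀ (Nat.one_lt_cast.2 hq1) (by omega))

theorem lamNu_eq_of_isSupportLine (hq1 : 1 < q) (hh1 : ν (h.coeff 1) = 0) {m : ℤ} {r : ℕ}
    (hr : 1 ≤ r) (hl : IsSupportLine q ν h m m r) : lamNu q ν h = m := by
  suffices IsLeast {y : ℝ | ∃ i : ℕ, 1 ≤ i ∧ h.coeff (q ^ i) ≠ 0 ∧
      y = ((ν (h.coeff (q ^ i)) : ℝ) - (ν (h.coeff 1) : ℝ)) / ((q : ℝ) ^ i - 1)} (-m) by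
    rw [lamNu, this.csInf_eq, neg_neg]
  refine ⟨⟨r, hr, hl.coeff_ne_zero, ?_⟩, ?_⟩
  · have : (ν (h.coeff (q ^ r)) : ℝ) + m * q ^ r = m := by exact_mod_cast hl.eq
    rw [hh1, Int.cast_zero, sub_zero, eq_div_iff (Nat.cast_pow_sub_one_pos hq1 hr).ne']
    linarith
  · rintro y ⟨i, hi, hci, rfl⟩
    have : (m : ℝ) ≤ ν (h.coeff (q ^ i)) + m * q ^ i := by exact_mod_cast hl.le i hci
    rw [hh1, Int.cast_zero, sub_zero, le_div_iff₀ (Nat.cast_pow_sub_one_pos hq1 hi)]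
    linarith

theorem exists_isSupportLine_of_lamNu_eq (hq1 : 1 < q) (hh1 : ν (h.coeff 1) = 0)
    (hh : ∃ i, 1 ≤ i ∧ h.coeff (q ^ i) ≠ 0) {n : ℤ} (hlam : lamNu q ν h = n) :
    ∃ r, 1 ≤ r ∧ IsSupportLine q ν h n n r := by
  set S := {y : ℝ | ∃ i : ℕ, 1 ≤ i ∧ h.coeff (q ^ i) ≠ 0 ∧
      y = ((ν (h.coeff (q ^ i)) : ℝ) - (ν (h.coeff 1) : ℝ)) / ((q : ℝ) ^ i - 1)}
  have hS : sInf S = -n := by rw [← hlam, lamNu, neg_neg]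
  have hfin : S.Finite := ((finite_setOf_coeff_qpow_ne_zero hq1 h).image _).subset
    fun y ⟨i, _, hi, hy⟩ => ⟨i, hi, hy.symm⟩
  have hne : S.Nonempty := let ⟨i, hi, hci⟩ := hh; ⟨_, i, hi, hci, rfl⟩
  obtain ⟨i₁, hi₁, hci₁, heq⟩ := hS ▸ hne.csInf_mem hfin
  refine (exists_isSupportLine_of_le hq1 (fun i hci => ?_) hci₁ ?_).imp
    fun r hr => ⟨hi₁.trans hr.1, hr.2⟩
  · rcases Nat.eq_zero_or_pos i with rfl | hi
    · simp [hh1]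
    have hle := hS ▸ csInf_le hfin.bddBelow ⟨i, hi, hci, rfl⟩
    rw [hh1, Int.cast_zero, sub_zero, le_div_iff₀ (Nat.cast_pow_sub_one_pos hq1 hi)] at hle
    have : (n : ℝ) ≤ ν (h.coeff (q ^ i)) + n * q ^ i := by linarith
    exact_mod_cast this
  · rw [hh1, Int.cast_zero, sub_zero, eq_div_iff (Nat.cast_pow_sub_one_pos hq1 hi₁).ne'] at heq
    have : (ν (h.coeff (q ^ i₁)) : ℝ) + n * q ^ i₁ = n := by linarith
    exact_mod_cast this

end LamNu

theorem stmt19_general {Fq F : Type*} [Field Fq] [Fintype Fq] [Field F] [Algebra Fq F]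
    (q : ℕ) (hq : q = Fintype.card Fq)
    (ν : F → ℤ)
    (hmul : ∀ x y : F, x ≠ 0 → y ≠ 0 → ν (x * y) = ν x + ν y)
    (hadd : ∀ x y : F, x ≠ 0 → y ≠ 0 → x + y ≠ 0 → min (ν x) (ν y) ≤ ν (x + y))
    (φ ψ : Polynomial F) (hφ : IsqLin q φ) (hψ : IsqLin q ψ)
    (hdφ : 1 < φ.natDegree)
    (hψ0 : ψ.coeff 1 ≠ 0)
    (hνφ : ν (φ.coeff 1) = 0) (hνψ : ν (ψ.coeff 1) = 0)
    (f : Polynomial F) (hf : IsqLin q f) (hf0 : f ≠ 0)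
    (hcomm : f.comp φ = ψ.comp f) :
    (∃ n : ℤ, lamNu q ν φ = n) → ∃ n : ℤ, lamNu q ν ψ = n := by
  rintro ⟨n, hn⟩
  have hν : IsIntValuation ν := ⟨hmul, hadd⟩
  have hq1 : 1 < q := hq ▸ Fintype.one_lt_card
  obtain ⟨e, hp, hcard⟩ := FiniteField.card Fq (ringChar Fq)
  have : Fact (ringChar Fq).Prime := ⟨hp⟩
  have : CharP F (ringChar Fq) := charP_of_injective_algebraMap (algebraMap Fq F).injective _
  have hqp : q = ringChar Fq ^ (e : ℕ) := hq.trans hcard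
  obtain ⟨r, hr, hφl⟩ := exists_isSupportLine_of_lamNu_eq hq1 hνφ
    (hφ.exists_one_le_coeff_qpow_ne_zero hdφ) hn
  obtain ⟨M, j, hfl⟩ := exists_isSupportLine (ν := ν) hq1 n (hf.exists_coeff_qpow_ne_zero hf0)
  obtain ⟨B, i, hψl⟩ := exists_isSupportLine (ν := ν) hq1 M ⟨0, by simpa using hψ0⟩
  have hfφ := hfl.comp hν hqp hq1 hf hφl
  obtain ⟨rfl, hij⟩ := (hψl.comp hν hqp hq1 hψ hfl).unique (hcomm ▸ hfφ)
  obtain rfl : i = r := by omega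
  exact ⟨B, lamNu_eq_of_isSupportLine hq1 hνψ hr hψl⟩

theorem stmt19 {Fq F : Type*} [Field Fq] [Fintype Fq] [Field F] [Algebra Fq F]
    (q : ℕ) (hq : q = Fintype.card Fq)
    (ν : F → ℤ)
    (hmul : ∀ x y : F, x ≠ 0 → y ≠ 0 → ν (x * y) = ν x + ν y)
    (hadd : ∀ x y : F, x ≠ 0 → y ≠ 0 → x + y ≠ 0 → min (ν x) (ν y) ≤ ν (x + y))
    (hsurj : ∀ n : ℤ, ∃ x : F, x ≠ 0 ∧ ν x = n)
    (φ ψ : Polynomial F) (hφ : IsqLin q φ) (hψ : IsqLin q ψ)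
    (hdφ : 1 < φ.natDegree) (hdψ : 1 < ψ.natDegree)
    (hφ0 : φ.coeff 1 ≠ 0) (hψ0 : ψ.coeff 1 ≠ 0)
    (hνφ : ν (φ.coeff 1) = 0) (hνψ : ν (ψ.coeff 1) = 0)
    (f : Polynomial F) (hf : IsqLin q f) (hf0 : f ≠ 0)
    (hcomm : f.comp φ = ψ.comp f) :
    (∃ n : ℤ, lamNu q ν φ = n) → ∃ n : ℤ, lamNu q ν ψ = n :=
  stmt19_general q hq ν hmul hadd φ ψ hφ hψ hdφ hψ0 hνφ hνψ f hf hf0 hcomm
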